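/- arXiv:0712.3748 — 6 statements merged into one kernel-verified Lean document; each statement's English description precedes it below -/
import Mathlib

section
/- Let S be a commutative ring and S̃ = S[X]/(m(X)) an extension S(y) generated by an element y with monic minimal polynomial m(X) ∈ S[X] such that m'(y) is invertible in S̃. Then S̃ is formally étale over S: for every surjective ring homomorphism h : T → T̃ with nilpotent kernel, and homomorphisms v : S → T and ṽ : S̃ → T̃ with ṽ ∘ g = h ∘ v (where g : S → S̃ is the structure map), there exists a unique homomorphism u : S̃ → T with u ∘ g = v and h ∘ u = ṽ. -/
/-!
Ring homs `u : S[X]/(m) → T` over `v` correspond to roots `u (root m)` of `m.map v`, and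
`h ∘ u = ṽ` says that this root lies over `ṽ (root m)`, a root of `m.map (h ∘ v)`. Units lift
along `h` because `ker h` is nil, so `m'` is a unit at every point above `ṽ (root m)`, and
Newton's iteration lifts that root to a unique root of `m.map v` above it.
-/

open Polynomial

section NilKernel

variable {T T' : Type*} [CommRing T] [CommRing T'] {h : T →+* T'}

theorem isUnit_of_isUnit_map_of_ker_le_nilradical (hsurj : Function.Surjective h)
    (hker : RingHom.ker h ≤ nilradical T) {a : T} (ha : IsUnit (h a)) : IsUnit a := by
  obtain ⟨b, hb⟩ := hsurj ↑ha.unit⁻¹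
  have hab : a * b - 1 ∈ RingHom.ker h := by simp [hb]
  have hunit : IsUnit (a * b - 1 + 1) := (mem_nilradical.mp (hker hab)).isUnit_add_one
  exact isUnit_of_mul_isUnit_left (by simpa using hunit)

theorem existsUnique_eval_eq_zero_of_eval_map_eq_zero (hsurj : Function.Surjective h)
    (hker : RingHom.ker h ≤ nilradical T) {P : T[X]} {y : T'} (hy : (P.map h).eval y = 0)
    (hy' : IsUnit ((P.map h).derivative.eval y)) :
    ∃! x : T, h x = y ∧ P.eval x = 0 := by
  obtain ⟨x₀, rfl⟩ := hsurj y
  have hx₀ : IsNilpotent (P.eval x₀) :=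
    mem_nilradical.mp <| hker <| by rwa [RingHom.mem_ker, ← eval₂_hom, ← eval_map]
  have hx₀' : IsUnit (P.derivative.eval x₀) :=
    isUnit_of_isUnit_map_of_ker_le_nilradical hsurj hker
      (by rwa [derivative_map, eval_map, eval₂_hom] at hy')
  obtain ⟨r, ⟨hr_nil, hr⟩, hr_unique⟩ :=
    P.existsUnique_nilpotent_sub_and_aeval_eq_zero (x := x₀) (by simpa using hx₀)
      (by simpa using hx₀')
  simp only [coe_aeval_eq_eval] at hr hr_unique
  -- `h r` and `h x₀` are roots of `P^h` differing by a nilpotent: uniqueness in `T'`.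
  have hr_over : h r = h x₀ :=
    ((P.map h).existsUnique_nilpotent_sub_and_aeval_eq_zero (x := h x₀)
      (by simp [hy]) (by simpa using hy')).unique
      ⟨by simpa using hr_nil.map h,
        by rw [coe_aeval_eq_eval, eval_map, eval₂_hom, hr, map_zero]⟩
      ⟨by simp, by simpa using hy⟩
  refine ⟨r, ⟨hr_over, hr⟩, fun x ⟨hx, hx_root⟩ ↦ hr_unique x ⟨?_, hx_root⟩⟩
  exact mem_nilradical.mp <| hker <| by simp [hx]

end NilKernel

namespace AdjoinRoot

variable {S T : Type*} [CommRing S] [CommRing T] {m : S[X]}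

theorem eval_map_comp_of_root (f : AdjoinRoot m →+* T) (p : S[X]) :
    (p.map (f.comp (of m))).eval (f (root m)) = f (aeval (root m) p) := by
  rw [eval_map, ← hom_eval₂, aeval_def, algebraMap_eq]

theorem existsUnique_ringHom_of_existsUnique_root {T' : Type*} [CommRing T'] {v : S →+* T}
    {h : T →+* T'} {v' : AdjoinRoot m →+* T'} (hcomm : v'.comp (of m) = h.comp v)
    (hroot : ∃! x : T, h x = v' (root m) ∧ (m.map v).eval x = 0) :
    ∃! u : AdjoinRoot m →+* T, u.comp (of m) = v ∧ h.comp u = v' := by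
  obtain ⟨x, ⟨hx, hx_root⟩, hx_unique⟩ := hroot
  rw [eval_map] at hx_root
  refine ⟨lift v x hx_root, ⟨lift_comp_of hx_root, ringHom_ext ?_ (by simpa using hx)⟩, ?_⟩
  · rw [RingHom.comp_assoc, lift_comp_of, hcomm]
  · rintro u ⟨hu_of, hu_over⟩
    refine ringHom_ext (by rw [hu_of, lift_comp_of]) ?_
    rw [lift_root]
    refine hx_unique _ ⟨by rw [← hu_over, RingHom.comp_apply], ?_⟩
    rw [← hu_of, eval_map_comp_of_root, aeval_eq, mk_self, map_zero]

end AdjoinRoot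

theorem adjoinRoot_formallyEtale_general {S : Type*} [CommRing S] (m : Polynomial S)
    (hder : IsUnit (Polynomial.aeval (AdjoinRoot.root m) m.derivative))
    {T T' : Type*} [CommRing T] [CommRing T'] (h : T →+* T')
    (hsurj : Function.Surjective h) (hnil : ∃ n : ℕ, (RingHom.ker h) ^ n = ⊥)
    (v : S →+* T) (v' : AdjoinRoot m →+* T')
    (hcomm : v'.comp (AdjoinRoot.of m) = h.comp v) :
    ∃! u : AdjoinRoot m →+* T, u.comp (AdjoinRoot.of m) = v ∧ h.comp u = v' := by
  obtain ⟨n, hn⟩ := hnil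
  have hker : RingHom.ker h ≤ nilradical T := fun x hx ↦
    ⟨n, by simpa [hn] using Ideal.pow_mem_pow hx n⟩
  have hmap (p : S[X]) :
      ((p.map v).map h).eval (v' (AdjoinRoot.root m)) = v' (aeval (AdjoinRoot.root m) p) := by
    rw [map_map, ← hcomm, AdjoinRoot.eval_map_comp_of_root]
  refine AdjoinRoot.existsUnique_ringHom_of_existsUnique_root hcomm
    (existsUnique_eval_eq_zero_of_eval_map_eq_zero hsurj hker ?_ ?_)
  · rw [hmap, AdjoinRoot.aeval_eq, AdjoinRoot.mk_self, map_zero]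
  · rw [derivative_map, derivative_map, hmap]
    exact hder.map v'

/-- Let `S` be a commutative ring and `S̃ = S[X]/(m)` the extension
generated by a root `y` of a monic polynomial `m` such that `m'(y)` is invertible in `S̃`.
Then `S̃` is formally étale over `S`: unique lifting against surjections with nilpotent
kernel. -/
theorem adjoinRoot_formallyEtale {S : Type*} [CommRing S] (m : Polynomial S)
    (hm : m.Monic) (hder : IsUnit (Polynomial.aeval (AdjoinRoot.root m) m.derivative))
    {T T' : Type*} [CommRing T] [CommRing T'] (h : T →+* T')
    (hsurj : Function.Surjective h) (hnil : ∃ n : ℕ, (RingHom.ker h) ^ n = ⊥)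
    (v : S →+* T) (v' : AdjoinRoot m →+* T')
    (hcomm : v'.comp (AdjoinRoot.of m) = h.comp v) :
    ∃! u : AdjoinRoot m →+* T, u.comp (AdjoinRoot.of m) = v ∧ h.comp u = v' :=
  adjoinRoot_formallyEtale_general m hder h hsurj hnil v v' hcomm
end

section
/- Let K be a field, R a commutative K-algebra, and ψ : R → R[[T]] a higher derivation with components ψ^(k). For a ∈ K define a.ψ to be the higher derivation with components (a.ψ)^(k) = a^k ψ^(k). If ψ is iterative (ψ^(i)∘ψ^(j) = C(i+j,i)ψ^(i+j) for all i,j), then for all a, b ∈ K: (a.ψ)·(b.ψ) = (a+b).ψ, where · is the product of higher derivations given by (ψ₁·ψ₂)^(k) = Σ_{i+j=k} ψ₁^(i)∘ψ₂^(j). Conversely, if K is infinite and (a.ψ)·(b.ψ) = (a+b).ψ holds for all a,b ∈ K, then ψ is iterative. -/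
/-!
Iterativity `D i ∘ D j = C(i+j, i) • D (i+j)` turns the `k`-th component of `(a.D)·(b.D)` into
`∑_{i+j=k} C(k, i) aⁱ bʲ • D k`, which is `(a+b)ᵏ • D k` by the binomial theorem. Conversely, at
`b = 1` the identity says that two polynomials in `a` of degree at most `k` agree at every point of
the infinite field `K`, so their coefficients of `aⁱ` agree, and these are the two sides of the
iterativity relation.
-/

open PowerSeries Finset

section PolynomialIdentity

variable {K M : Type*} [Field K] [Infinite K] [AddCommGroup M] [Module K M]

theorem eq_zero_of_forall_sum_range_mul_pow_eq_zero {c : ℕ → K} {n : ℕ}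
    (h : ∀ a : K, ∑ i ∈ range n, c i * a ^ i = 0) {i : ℕ} (hi : i < n) : c i = 0 := by
  set p : Polynomial K := ∑ i ∈ range n, Polynomial.C (c i) * Polynomial.X ^ i
  have hp : p = 0 := Polynomial.funext fun a => by simpa [p, Polynomial.eval_finsetSum] using h a
  simpa [p, Polynomial.finsetSum_coeff, Polynomial.coeff_C_mul_X_pow, hi] using
    congrArg (Polynomial.coeff · i) hp

theorem eq_zero_of_forall_sum_range_pow_smul_eq_zero {f : ℕ → M} {n : ℕ}
    (h : ∀ a : K, ∑ i ∈ range n, a ^ i • f i = 0) {i : ℕ} (hi : i < n) : f i = 0 := by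
  refine (Module.forall_dual_apply_eq_zero_iff K (f i)).mp fun φ => ?_
  refine eq_zero_of_forall_sum_range_mul_pow_eq_zero (c := fun i => φ (f i)) (fun a => ?_) hi
  simpa [mul_comm] using congrArg φ (h a)

end PolynomialIdentity

section HigherDerivation

variable {K M : Type*} [CommSemiring K] [AddCommMonoid M] [Module K M]

def IsIterative (D : ℕ → M →ₗ[K] M) : Prop :=
  ∀ i j x, D i (D j x) = ((i + j).choose i : K) • D (i + j) x

/-- `(a.D)·(b.D) = (a+b).D`, where `a.D` is the family `(aᵏ • D k)ₖ`. -/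
def IsAdditiveScaling (D : ℕ → M →ₗ[K] M) : Prop :=
  ∀ (a b : K) k x, ∑ p ∈ antidiagonal k, a ^ p.1 • D p.1 (b ^ p.2 • D p.2 x) = (a + b) ^ k • D k x

theorem IsIterative.isAdditiveScaling {D : ℕ → M →ₗ[K] M} (hD : IsIterative D) :
    IsAdditiveScaling D := by
  intro a b k x
  have hterm : ∀ p ∈ antidiagonal k, a ^ p.1 • D p.1 (b ^ p.2 • D p.2 x) =
      (k.choose p.1 • (a ^ p.1 * b ^ p.2)) • D k x := by
    intro p hp
    rw [HasAntidiagonal.mem_antidiagonal] at hp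
    rw [map_smul, hD, hp, smul_smul, smul_smul, nsmul_eq_mul]
    ring_nf
  rw [sum_congr rfl hterm, ← sum_smul, (Commute.all a b).add_pow']

end HigherDerivation

theorem IsAdditiveScaling.isIterative {K M : Type*} [Field K] [Infinite K] [AddCommGroup M]
    [Module K M] {D : ℕ → M →ₗ[K] M}
    (hD : IsAdditiveScaling D) : IsIterative D := by
  intro i j x
  have hpoly : ∀ a : K, ∑ m ∈ range (i + j + 1),
      a ^ m • (D m (D (i + j - m) x) - ((i + j).choose m : K) • D (i + j) x) = 0 := by
    intro a
    have h := hD a 1 (i + j) x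
    rw [(Commute.all a 1).add_pow', sum_smul] at h
    simp only [one_pow, one_smul, mul_one, nsmul_eq_mul, ← smul_smul, smul_comm _ (a ^ _)] at h
    rw [Nat.sum_antidiagonal_eq_sum_range_succ_mk, Nat.sum_antidiagonal_eq_sum_range_succ_mk] at h
    simp only [smul_sub, sum_sub_distrib, h, sub_self]
  have := eq_zero_of_forall_sum_range_pow_smul_eq_zero hpoly (i := i) (by omega)
  rwa [Nat.add_sub_cancel_left, sub_eq_zero] at this

theorem iterative_iff_additive_action_general {K R : Type*} [Field K] [CommRing R] [Algebra K R]
    (ψ : R →ₐ[K] PowerSeries R) :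
    ((∀ (i j : ℕ) (r : R),
        PowerSeries.coeff (R := R) i (ψ (PowerSeries.coeff (R := R) j (ψ r))) =
          (((i + j).choose i : K)) • PowerSeries.coeff (R := R) (i + j) (ψ r)) →
      ∀ (a b : K) (k : ℕ) (r : R),
        ∑ p ∈ Finset.HasAntidiagonal.antidiagonal k,
            a ^ p.1 • PowerSeries.coeff (R := R) p.1 (ψ (b ^ p.2 • PowerSeries.coeff (R := R) p.2 (ψ r))) =
          (a + b) ^ k • PowerSeries.coeff (R := R) k (ψ r)) ∧
    (Infinite K →
      (∀ (a b : K) (k : ℕ) (r : R),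
        ∑ p ∈ Finset.HasAntidiagonal.antidiagonal k,
            a ^ p.1 • PowerSeries.coeff (R := R) p.1 (ψ (b ^ p.2 • PowerSeries.coeff (R := R) p.2 (ψ r))) =
          (a + b) ^ k • PowerSeries.coeff (R := R) k (ψ r)) →
      ∀ (i j : ℕ) (r : R),
        PowerSeries.coeff (R := R) i (ψ (PowerSeries.coeff (R := R) j (ψ r))) =
          (((i + j).choose i : K)) • PowerSeries.coeff (R := R) (i + j) (ψ r)) := by
  let D : ℕ → R →ₗ[K] R := fun k => (coeff k).restrictScalars K ∘ₗ ψ.toLinearMap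
  exact ⟨IsIterative.isAdditiveScaling (D := D), fun _ => IsAdditiveScaling.isIterative (D := D)⟩

/-- For a higher derivation `ψ` and `a ∈ K` let `a.ψ` have components
`aᵏ ψ⁽ᵏ⁾`. If `ψ` is iterative then `(a.ψ)·(b.ψ) = (a+b).ψ` for all `a, b ∈ K`
(componentwise, via `(ψ₁·ψ₂)⁽ᵏ⁾ = Σ_{i+j=k} ψ₁⁽ⁱ⁾∘ψ₂⁽ʲ⁾`); conversely, if `K` is
infinite and this identity holds for all `a, b ∈ K`, then `ψ` is iterative. -/
theorem iterative_iff_additive_action {K R : Type*} [Field K] [CommRing R] [Algebra K R]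
    (ψ : R →ₐ[K] PowerSeries R)
    (h0 : ∀ r : R, PowerSeries.constantCoeff (R := R) (ψ r) = r) :
    ((∀ (i j : ℕ) (r : R),
        PowerSeries.coeff (R := R) i (ψ (PowerSeries.coeff (R := R) j (ψ r))) =
          (((i + j).choose i : K)) • PowerSeries.coeff (R := R) (i + j) (ψ r)) →
      ∀ (a b : K) (k : ℕ) (r : R),
        ∑ p ∈ Finset.HasAntidiagonal.antidiagonal k,
            a ^ p.1 • PowerSeries.coeff (R := R) p.1 (ψ (b ^ p.2 • PowerSeries.coeff (R := R) p.2 (ψ r))) =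
          (a + b) ^ k • PowerSeries.coeff (R := R) k (ψ r)) ∧
    (Infinite K →
      (∀ (a b : K) (k : ℕ) (r : R),
        ∑ p ∈ Finset.HasAntidiagonal.antidiagonal k,
            a ^ p.1 • PowerSeries.coeff (R := R) p.1 (ψ (b ^ p.2 • PowerSeries.coeff (R := R) p.2 (ψ r))) =
          (a + b) ^ k • PowerSeries.coeff (R := R) k (ψ r)) →
      ∀ (i j : ℕ) (r : R),
        PowerSeries.coeff (R := R) i (ψ (PowerSeries.coeff (R := R) j (ψ r))) =
          (((i + j).choose i : K)) • PowerSeries.coeff (R := R) (i + j) (ψ r)) :=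
  iterative_iff_additive_action_general ψ
end

section
/- Let (R, 𝔪) be a regular local ring of Krull dimension m over a field K, with 𝔪 generated by t₁,…,t_m, and suppose R is equipped with m pairwise commuting iterative derivations φ_{t₁},…,φ_{t_m} satisfying φ_{t_j}^(1)(t_i) = δ_{ij} and φ_{t_j}^(k)(t_i) = 0 for i ≠ j, k ≥ 1. Then for every r ∈ R ∖ {0} there exist k₁,…,k_m ∈ ℕ such that (φ_{t_m}^(k_m) ∘ ⋯ ∘ φ_{t_1}^(k_1))(r) is a unit in R, while (φ_{t_m}^(l_m) ∘ ⋯ ∘ φ_{t_1}^(l_1))(r) is a non-unit whenever l_j ≤ k_j for all j with strict inequality for some j. -/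
open PowerSeries

/-- The composite `g_{m-1}^{(k_{m-1})} ∘ ⋯ ∘ g_0^{(k_0)}` of component maps. -/
def multiComp {R : Type*} {m : ℕ} (g : Fin m → ℕ → R → R) (k : Fin m → ℕ) : R → R :=
  (List.ofFn fun j : Fin m => g j (k j)).foldl (fun f u => u ∘ f) id

/-!
Write `D_j^{(i)} x` for the `i`-th coefficient of `φ_j x`. As `φ_j (t_i) = t_i` is constant for
`i ≠ j`, `D_j^{(i)}` commutes with multiplication by `t_i`; and `φ_j (t_j) ≡ X · u` modulo `t_j`
with `u(0) = 1`, so `D_j^{(i)} (x t_j^e)` is divisible by `t_j` for `i < e` and is `≡ x` for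
`i = e`. Hence, among monomials of one total degree, `D^{(k)} (c t^e)` lies in `𝔪` for `e ≠ k`
and is `≡ c` for `e = k`. By Krull's intersection theorem `r ∈ 𝔪^n ∖ 𝔪^{n+1}` for some `n`;
writing `r = ∑ c_e t^e` with `|e| = n`, some `c_f` is a unit, and then so is `D^{(f)} r ≡ c_f`.
A minimal such multi-index for the product order is the required one.
-/

section SingleMap

variable {R F : Type*} [CommRing R] [FunLike F R R⟦X⟧] [RingHomClass F R R⟦X⟧] {ψ : F}

theorem exists_map_mul_pow_eq {s : R} (hs : constantCoeff (ψ s) = s) (x : R) (e : ℕ) :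
    ∃ q w : R⟦X⟧, constantCoeff q = coeff 1 (ψ s) ∧
      ψ (x * s ^ e) = X ^ e * (ψ x * q ^ e) + C s * w := by
  set q : R⟦X⟧ := mk fun n => coeff (n + 1) (ψ s)
  have hψs : ψ s = X * q + C s := (eq_X_mul_shift_add_const (ψ s)).trans (by rw [hs])
  obtain ⟨w, hw⟩ := sub_dvd_pow_sub_pow (ψ s) (X * q) e
  refine ⟨q, ψ x * w, by simp [q], ?_⟩
  rw [map_mul, map_pow]
  linear_combination ψ x * hw + ψ x * w * hψs

theorem dvd_coeff_map_mul_pow_of_lt {s : R} (hs : constantCoeff (ψ s) = s) (x : R) {i e : ℕ}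
    (hie : i < e) : s ∣ coeff i (ψ (x * s ^ e)) := by
  obtain ⟨q, w, -, hw⟩ := exists_map_mul_pow_eq hs x e
  rw [hw, map_add, coeff_X_pow_mul', if_neg (by omega), coeff_C_mul, zero_add]
  exact dvd_mul_right _ _

theorem dvd_coeff_map_mul_pow_self_sub (hψ : ∀ r, constantCoeff (ψ r) = r) {s : R}
    (hs : coeff 1 (ψ s) = 1) (x : R) (e : ℕ) : s ∣ coeff e (ψ (x * s ^ e)) - x := by
  obtain ⟨q, w, hq, hw⟩ := exists_map_mul_pow_eq (hψ s) x e
  rw [hw, map_add, coeff_X_pow_mul', if_pos le_rfl, Nat.sub_self, coeff_zero_eq_constantCoeff,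
    map_mul, map_pow, hq, hs, hψ, one_pow, mul_one, coeff_C_mul, add_sub_cancel_left]
  exact dvd_mul_right _ _

theorem coeff_map_mul_of_map_eq_C {a : R} (ha : ψ a = C a) (x : R) (i : ℕ) :
    coeff i (ψ (x * a)) = coeff i (ψ x) * a := by
  rw [map_mul, ha, coeff_mul_C]

end SingleMap

section Composite

variable {R F ι : Type*} [CommRing R] [FunLike F R R⟦X⟧] [RingHomClass F R R⟦X⟧]

noncomputable def hasseComp (φ : ι → F) (k : ι → ℕ) : List ι → R →+ R
  | [] => AddMonoidHom.id R
  | j :: L => (hasseComp φ k L).comp ((coeff (k j)).toAddMonoidHom.comp (φ j : R →+ R⟦X⟧))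

variable {φ : ι → F} {t : ι → R}

theorem hasseComp_cons_apply (k : ι → ℕ) (j : ι) (L : List ι) (x : R) :
    hasseComp φ k (j :: L) x = hasseComp φ k L (coeff (k j) (φ j x)) := rfl

theorem map_list_prod_pow_eq_C (hC : ∀ i j, i ≠ j → φ j (t i) = C (t i)) {j : ι} {L : List ι}
    (hj : j ∉ L) (e : ι → ℕ) :
    φ j (L.map fun i => t i ^ e i).prod = C (L.map fun i => t i ^ e i).prod := by
  rw [map_list_prod, map_list_prod, List.map_map, List.map_map]
  congr 1
  refine List.map_congr_left fun i hi => ?_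
  simp [hC i j (ne_of_mem_of_not_mem hi hj)]

theorem dvd_hasseComp (hC : ∀ i j, i ≠ j → φ j (t i) = C (t i)) {j : ι} {L : List ι}
    (hj : j ∉ L) (k : ι → ℕ) {x : R} (hx : t j ∣ x) : t j ∣ hasseComp φ k L x := by
  induction L generalizing x with
  | nil => exact hx
  | cons i L ih =>
    obtain ⟨hji, hj⟩ := not_or.mp (List.mem_cons.not.mp hj)
    obtain ⟨y, rfl⟩ := hx
    rw [hasseComp_cons_apply]
    refine ih hj ?_
    rw [mul_comm, coeff_map_mul_of_map_eq_C (hC j i hji)]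
    exact dvd_mul_left _ _

theorem dvd_hasseComp_mul_prod_of_lt (h0 : ∀ j r, constantCoeff (φ j r) = r)
    (hC : ∀ i j, i ≠ j → φ j (t i) = C (t i)) {L : List ι} (hL : L.Nodup) {k e : ι → ℕ}
    {j : ι} (hj : j ∈ L) (hlt : k j < e j) (c : R) :
    t j ∣ hasseComp φ k L (c * (L.map fun i => t i ^ e i).prod) := by
  induction L generalizing c with
  | nil => cases hj
  | cons i L ih =>
    obtain ⟨hi, hL⟩ := List.nodup_cons.mp hL
    rw [List.map_cons, List.prod_cons, ← mul_assoc, hasseComp_cons_apply,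
      coeff_map_mul_of_map_eq_C (map_list_prod_pow_eq_C hC hi e)]
    rcases List.mem_cons.mp hj with rfl | hj
    · exact dvd_hasseComp hC hi k ((dvd_coeff_map_mul_pow_of_lt (h0 j (t j)) c hlt).mul_right _)
    · exact ih hL hj _

theorem hasseComp_mul_prod_sub_mem (h0 : ∀ j r, constantCoeff (φ j r) = r)
    (hC : ∀ i j, i ≠ j → φ j (t i) = C (t i)) (h1 : ∀ j, coeff 1 (φ j (t j)) = 1)
    {L : List ι} (hL : L.Nodup) (k : ι → ℕ) (c : R) :
    hasseComp φ k L (c * (L.map fun i => t i ^ k i).prod) - c ∈ Ideal.span (Set.range t) := by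
  induction L generalizing c with
  | nil => simp [hasseComp]
  | cons j L ih =>
    obtain ⟨hj, hL⟩ := List.nodup_cons.mp hL
    obtain ⟨z, hz⟩ := dvd_coeff_map_mul_pow_self_sub (h0 j) (h1 j) c (k j)
    rw [List.map_cons, List.prod_cons, ← mul_assoc, hasseComp_cons_apply,
      coeff_map_mul_of_map_eq_C (map_list_prod_pow_eq_C hC hj k), sub_eq_iff_eq_add'.mp hz,
      add_mul, map_add, add_sub_right_comm]
    refine add_mem (ih hL c) (Ideal.mem_of_dvd _ ?_ (Ideal.subset_span ⟨j, rfl⟩))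
    exact dvd_hasseComp hC hj k (dvd_mul_of_dvd_left (dvd_mul_right _ _) _)

end Composite

section Coordinates

variable {R F : Type*} [CommRing R] [FunLike F R R⟦X⟧] [RingHomClass F R R⟦X⟧] {m : ℕ}
  {φ : Fin m → F} {t : Fin m → R}

theorem multiComp_coeff_eq_hasseComp (k : Fin m → ℕ) :
    multiComp (fun j i x => coeff i (φ j x)) k = hasseComp φ k (List.finRange m) := by
  have key : ∀ (L : List (Fin m)) (f : R → R),
      (L.map fun j x => coeff (k j) (φ j x)).foldl (fun f u => u ∘ f) f = hasseComp φ k L ∘ f := by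
    intro L
    induction L with
    | nil => intro f; rfl
    | cons j L ih => intro f; exact ih _
  rw [multiComp, List.ofFn_eq_map, key]
  rfl

theorem multiComp_coeff_mul_prod_sub_mem (h0 : ∀ j r, constantCoeff (φ j r) = r)
    (hC : ∀ i j, i ≠ j → φ j (t i) = C (t i)) (h1 : ∀ j, coeff 1 (φ j (t j)) = 1)
    {k e : Fin m → ℕ} (hke : ∑ j, e j = ∑ j, k j) (c : R) :
    multiComp (fun j i x => coeff i (φ j x)) k (c * ∏ j, t j ^ e j) - (if e = k then c else 0) ∈
      Ideal.span (Set.range t) := by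
  rw [multiComp_coeff_eq_hasseComp, Fin.prod_univ_def]
  split_ifs with h
  · subst h
    exact hasseComp_mul_prod_sub_mem h0 hC h1 (List.nodup_finRange m) e c
  · obtain ⟨j, hj⟩ : ∃ j, k j < e j := by
      by_contra! hle
      exact h (funext fun j =>
        (Finset.sum_eq_sum_iff_of_le fun j _ => hle j).mp hke j (Finset.mem_univ j))
    rw [sub_zero]
    exact Ideal.mem_of_dvd _ (dvd_hasseComp_mul_prod_of_lt h0 hC (List.nodup_finRange m)
      (List.mem_finRange j) hj c) (Ideal.subset_span ⟨j, rfl⟩)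

end Coordinates

section IdealPow

variable {R : Type*} [CommRing R]

theorem Ideal.exists_mem_pow_notMem_pow_succ_of_iInf_eq_bot {I : Ideal R}
    (hI : ⨅ n, I ^ n = ⊥) {r : R} (hr : r ≠ 0) : ∃ n, r ∈ I ^ n ∧ r ∉ I ^ (n + 1) := by
  classical
  have hex : ∃ n, r ∉ I ^ n := by
    by_contra! h
    exact hr ((Submodule.eq_bot_iff _).mp hI r (Ideal.mem_iInf.mpr h))
  obtain ⟨n, hn⟩ : ∃ n, Nat.find hex = n + 1 :=
    Nat.exists_eq_add_one.mpr <| Nat.pos_of_ne_zero fun hfind =>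
      Nat.find_spec hex (by simp [hfind])
  exact ⟨n, not_not.mp (Nat.find_min hex (by omega)), hn ▸ Nat.find_spec hex⟩

theorem Ideal.exists_eq_sum_of_mem_span_range_pow {ι : Type*} [Fintype ι] {t : ι → R}
    {n : ℕ} {r : R} (hr : r ∈ Ideal.span (Set.range t) ^ n) :
    ∃ c : (ι →₀ ℕ) →₀ R, (∀ e ∈ c.support, e.degree = n) ∧
      c.sum (fun e a => a * ∏ j, t j ^ e j) = r := by
  rw [Ideal.span, Submodule.span_pow, ← Set.image_univ, Finsupp.image_pow_eq_finsuppProd_image,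
    Finsupp.mem_span_image_iff_linearCombination] at hr
  obtain ⟨c, hc, rfl⟩ := hr
  refine ⟨c, fun e he => (hc he).1, ?_⟩
  simp [Finsupp.linearCombination_apply, Finsupp.prod_fintype]

end IdealPow

theorem exists_isUnit_multiComp_coeff {R F : Type*} [CommRing R] [IsLocalRing R]
    [IsNoetherianRing R] [FunLike F R R⟦X⟧] [RingHomClass F R R⟦X⟧] {m : ℕ} {φ : Fin m → F}
    {t : Fin m → R} (hspan : Ideal.span (Set.range t) = IsLocalRing.maximalIdeal R)
    (h0 : ∀ j r, constantCoeff (φ j r) = r) (hC : ∀ i j, i ≠ j → φ j (t i) = C (t i))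
    (h1 : ∀ j, coeff 1 (φ j (t j)) = 1) {r : R} (hr : r ≠ 0) :
    ∃ k, IsUnit (multiComp (fun j i x => coeff i (φ j x)) k r) := by
  set I := Ideal.span (Set.range t)
  have hKrull : ⨅ n, I ^ n = ⊥ := by
    rw [hspan]
    exact Ideal.iInf_pow_eq_bot_of_isLocalRing _ Ideal.IsPrime.ne_top'
  obtain ⟨n, hn, hn1⟩ := Ideal.exists_mem_pow_notMem_pow_succ_of_iInf_eq_bot hKrull hr
  obtain ⟨c, hdeg, rfl⟩ := Ideal.exists_eq_sum_of_mem_span_range_pow hn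
  have hdegSum : ∀ e ∈ c.support, ∑ j, e j = n := fun e he => by
    rw [← Finsupp.degree_eq_sum, hdeg e he]
  obtain ⟨e, he, hce⟩ : ∃ e ∈ c.support, c e ∉ I := by
    by_contra! hc
    refine hn1 (Ideal.sum_mem _ fun e he => ?_)
    rw [pow_succ', ← hdegSum e he, ← Finset.prod_pow_eq_pow_sum]
    exact Ideal.mul_mem_mul (hc e he) <| Ideal.prod_mem_prod fun j _ =>
      Ideal.pow_mem_pow (Ideal.subset_span (Set.mem_range_self j)) _
  refine ⟨e, IsLocalRing.notMem_maximalIdeal.mp fun hunit => hce ?_⟩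
  rw [← hspan] at hunit
  have hsum : multiComp (fun j i x => coeff i (φ j x)) e (c.sum fun e a => a * ∏ j, t j ^ e j) -
      c e = ∑ e' ∈ c.support, (multiComp (fun j i x => coeff i (φ j x)) e
        (c e' * ∏ j, t j ^ e' j) - if ⇑e' = ⇑e then c e' else 0) := by
    simp only [Finset.sum_sub_distrib, multiComp_coeff_eq_hasseComp, Finsupp.sum, map_sum,
      DFunLike.coe_fn_eq, Finset.sum_ite_eq', if_pos he]
  have hdiff := Ideal.sum_mem I fun e' he' =>
    multiComp_coeff_mul_prod_sub_mem h0 hC h1 ((hdegSum e' he').trans (hdegSum e he).symm) (c e')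
  rw [← hsum] at hdiff
  simpa using sub_mem hunit hdiff

theorem regular_local_invertible_derivative_general {K R : Type*} [Field K] [CommRing R]
    [IsLocalRing R] [IsNoetherianRing R] [Algebra K R]
    (m : ℕ) (t : Fin m → R)
    (hspan : Ideal.span (Set.range t) = IsLocalRing.maximalIdeal R)
    (φ : Fin m → (R →ₐ[K] PowerSeries R))
    (h0 : ∀ j (r : R), PowerSeries.constantCoeff (φ j r) = r)
    (hδ : ∀ i j : Fin m, PowerSeries.coeff 1 ((φ j) (t i)) = if i = j then 1 else 0)
    (hoff : ∀ (i j : Fin m) (k : ℕ), i ≠ j → 1 ≤ k →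
      PowerSeries.coeff k ((φ j) (t i)) = 0) :
    ∀ r : R, r ≠ 0 →
      ∃ k : Fin m → ℕ,
        IsUnit (multiComp (fun j i x => PowerSeries.coeff i ((φ j) x)) k r) ∧
        ∀ l : Fin m → ℕ, (∀ j, l j ≤ k j) → (∃ j, l j < k j) →
          ¬ IsUnit (multiComp (fun j i x => PowerSeries.coeff i ((φ j) x)) l r) := by
  intro r hr
  have hC : ∀ i j, i ≠ j → φ j (t i) = C (t i) := fun i j hij => by
    ext (_ | n)
    · simp [h0]
    · simp [hoff i j _ hij n.succ_pos]
  have h1 : ∀ j, coeff 1 (φ j (t j)) = 1 := fun j => by simpa using hδ j j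
  obtain ⟨k, hk, hmin⟩ :=
    wellFounded_lt.has_min _ (exists_isUnit_multiComp_coeff hspan h0 hC h1 hr)
  exact ⟨k, hk, fun l hle hlt hl => hmin l hl (Pi.lt_def.mpr ⟨hle, hlt⟩)⟩

/-- Let `(R, 𝔪)` be a regular local ring of dimension `m` over `K`
with `𝔪 = (t₁, …, t_m)`, equipped with pairwise commuting iterative derivations
`φ_{t_j}` with `φ_{t_j}^{(1)}(t_i) = δ_{ij}` and `φ_{t_j}^{(k)}(t_i) = 0` for `i ≠ j`,
`k ≥ 1`. Then every `r ≠ 0` admits `(k₁,…,k_m)` such that the corresponding composite of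
components applied to `r` is a unit, while any strictly smaller multi-index yields a
non-unit. -/
theorem regular_local_invertible_derivative {K R : Type*} [Field K] [CommRing R]
    [IsDomain R] [IsLocalRing R] [IsNoetherianRing R] [Algebra K R]
    (m : ℕ) (t : Fin m → R)
    (hspan : Ideal.span (Set.range t) = IsLocalRing.maximalIdeal R)
    (hdim : ringKrullDim R = m)
    (φ : Fin m → (R →ₐ[K] PowerSeries R))
    (h0 : ∀ j (r : R), PowerSeries.constantCoeff (φ j r) = r)
    (hiter : ∀ j (i i' : ℕ) (r : R),
      PowerSeries.coeff i ((φ j) (PowerSeries.coeff i' ((φ j) r))) =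
        (((i + i').choose i : K)) • PowerSeries.coeff (i + i') ((φ j) r))
    (hcomm : ∀ (j j' : Fin m) (i i' : ℕ) (r : R),
      PowerSeries.coeff i ((φ j) (PowerSeries.coeff i' ((φ j') r))) =
        PowerSeries.coeff i' ((φ j') (PowerSeries.coeff i ((φ j) r))))
    (hδ : ∀ i j : Fin m, PowerSeries.coeff 1 ((φ j) (t i)) = if i = j then 1 else 0)
    (hoff : ∀ (i j : Fin m) (k : ℕ), i ≠ j → 1 ≤ k →
      PowerSeries.coeff k ((φ j) (t i)) = 0) :
    ∀ r : R, r ≠ 0 →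
      ∃ k : Fin m → ℕ,
        IsUnit (multiComp (fun j i x => PowerSeries.coeff i ((φ j) x)) k r) ∧
        ∀ l : Fin m → ℕ, (∀ j, l j ≤ k j) → (∃ j, l j < k j) →
          ¬ IsUnit (multiComp (fun j i x => PowerSeries.coeff i ((φ j) x)) l r) :=
  regular_local_invertible_derivative_general m t hspan φ h0 hδ hoff
end

section
/- Let (R, 𝔪) be a regular local ring over a field K equipped with commuting iterative derivations φ_{t₁},…,φ_{t_m} as in the lemma on invertible derivatives (φ_{t_j}^(1)(t_i) = δ_{ij} on a regular system of parameters). Let M be a finitely generated R-module equipped, for each j, with an additive map Φ_j : M → M[[T]] such that Φ_j(rm) = φ_{t_j}(r)·Φ_j(m) and Φ_j^(0) = id_M. Then M is a free R-module; more precisely, any minimal generating set of M is a basis. -/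
/-!
Let `I` be the ideal generated by the coefficients of all relations among a minimal generating
family `x` of `M`. Minimality puts `I` inside `𝔪`, and applying `Φ_j^(k)` to a relation shows, by
induction on `k`, that `I` is stable under every `φ_j^(k)`. Such an ideal vanishes. By induction
on `m`: if `I ⊆ (t₀)^a`, the colon ideal `(I : t₀^a)` is stable under `φ_1, …, φ_{m-1}` (which
fix `t₀`) and lies in `𝔪` (as `φ_0^(a)(t₀^a s) ≡ s` mod `t₀`), so its image in `R/(t₀)` vanishes
by induction, i.e. `I ⊆ (t₀)^(a+1)`. Krull's intersection theorem then gives `I = 0`.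
-/

open PowerSeries

section

variable {R : Type*} [CommRing R]

namespace Ideal

def IsHasseStable (φ : R →+* R⟦X⟧) (I : Ideal R) : Prop :=
  ∀ r ∈ I, ∀ k, coeff k (φ r) ∈ I

variable {φ : R →+* R⟦X⟧} {I J : Ideal R}

theorem isHasseStable_span {S : Set R} (hS : ∀ s ∈ S, ∀ k, coeff k (φ s) ∈ span S) :
    (span S).IsHasseStable φ := by
  intro r hr
  induction hr using Submodule.span_induction with
  | mem s hs => exact hS s hs
  | zero => simp
  | add a b _ _ ha hb => intro k; rw [map_add, map_add]; exact add_mem (ha k) (hb k)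
  | smul a b _ hb =>
    intro k
    rw [smul_eq_mul, map_mul, coeff_mul]
    exact Ideal.sum_mem _ fun p _ => mul_mem_left _ _ (hb p.2)

theorem isHasseStable_span_singleton {y : R} (hy : φ y = C y) : (span {y}).IsHasseStable φ :=
  isHasseStable_span fun s hs k => by
    rw [Set.mem_singleton_iff.mp hs, hy, coeff_C]
    split_ifs
    exacts [mem_span_singleton_self y, zero_mem _]

theorem IsHasseStable.colon_singleton (hI : I.IsHasseStable φ) {y : R} (hy : φ y = C y) :
    (I.colon {y}).IsHasseStable φ := by
  intro r hr k
  rw [Submodule.mem_colon_singleton, smul_eq_mul] at hr ⊢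
  simpa [hy, coeff_mul_C] using hI _ hr k

noncomputable def quotientHasse (J : Ideal R) (φ : R →+* R⟦X⟧) (hJ : J.IsHasseStable φ) :
    R ⧸ J →+* (R ⧸ J)⟦X⟧ :=
  Quotient.lift J ((PowerSeries.map (Quotient.mk J)).comp φ) fun a ha => by
    ext k
    simpa [Quotient.eq_zero_iff_mem] using hJ a ha k

@[simp]
theorem coeff_quotientHasse_mk (hJ : J.IsHasseStable φ) (k : ℕ) (r : R) :
    coeff k (quotientHasse J φ hJ (Quotient.mk J r)) = Quotient.mk J (coeff k (φ r)) := by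
  simp [quotientHasse]

theorem IsHasseStable.map_quotient (hI : I.IsHasseStable φ) (hJ : J.IsHasseStable φ) :
    (I.map (Quotient.mk J)).IsHasseStable (quotientHasse J φ hJ) := by
  intro r' hr' k
  obtain ⟨r, hr, rfl⟩ := (mem_map_iff_of_surjective _ Quotient.mk_surjective).mp hr'
  rw [coeff_quotientHasse_mk]
  exact mem_map_of_mem _ (hI r hr k)

theorem iInf_pow_eq_bot_of_le_jacobson [IsNoetherianRing R] (h : J ≤ jacobson ⊥) :
    ⨅ i : ℕ, J ^ i = ⊥ := by
  convert J.iInf_pow_smul_eq_bot_of_le_jacobson (M := R) h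
  simp

theorem map_mk_jacobson_bot_le : (jacobson (⊥ : Ideal R)).map (Quotient.mk J) ≤ jacobson ⊥ :=
  calc (jacobson ⊥).map (Quotient.mk J) ≤ J.jacobson.map (Quotient.mk J) :=
        map_mono (jacobson_mono bot_le)
    _ = jacobson ⊥ := by
        rw [map_jacobson_of_surjective Quotient.mk_surjective (by rw [mk_ker]), map_quotient_self]

theorem map_mk_span_range_fin_succ {m : ℕ} (t : Fin (m + 1) → R) :
    (span (Set.range t)).map (Quotient.mk (span {t 0})) =
      span (Set.range fun i : Fin m => Quotient.mk (span {t 0}) (t i.succ)) := by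
  rw [map_span, ← Set.range_comp, Fin.range_fin_succ, Function.comp_apply,
    Quotient.eq_zero_iff_mem.mpr (mem_span_singleton_self _), span_insert_zero]
  rfl

end Ideal

/-- Modulo `x`, `φ x` is `X` times a unit, so `φ (x ^ a * s)` is `X ^ a` times a unit times
`φ s`. -/
theorem PowerSeries.coeff_apply_pow_mul_sub_mem {φ : R →+* R⟦X⟧}
    (hφ : ∀ r, constantCoeff (φ r) = r) {x : R} (hx : coeff 1 (φ x) = 1) {J : Ideal R}
    (hxJ : x ∈ J) (a : ℕ) (s : R) : coeff a (φ (x ^ a * s)) - s ∈ J := by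
  obtain ⟨g, hg⟩ : X ∣ φ x - C x := X_dvd_iff.mpr (by simp [hφ])
  have hφx : φ x = X * g + C x := sub_eq_iff_eq_add.mp hg
  have hg0 : constantCoeff g = 1 := by
    simpa [hφx, coeff_C] using hx
  rw [← Ideal.Quotient.eq]
  set π := Ideal.Quotient.mk J
  have hπx : π x = 0 := Ideal.Quotient.eq_zero_iff_mem.mpr hxJ
  calc π (coeff a (φ (x ^ a * s)))
      = coeff a (PowerSeries.map π (φ (x ^ a * s))) := (coeff_map _ _ _).symm
    _ = coeff a (X ^ a * ((PowerSeries.map π g) ^ a * PowerSeries.map π (φ s))) := by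
        simp only [map_mul, map_pow, hφx, map_add, map_C, hπx, map_zero, add_zero, map_X]
        rw [mul_pow, mul_assoc]
    _ = π s := by
        simp only [coeff_X_pow_mul', le_refl, if_true, Nat.sub_self,
          coeff_zero_eq_constantCoeff_apply, map_mul, map_pow]
        simp only [← coeff_zero_eq_constantCoeff_apply, coeff_map]
        simp [hg0, hφ]

structure IsHasseDual {m : ℕ} (t : Fin m → R) (φ : Fin m → R →+* R⟦X⟧) : Prop where
  constantCoeff_apply : ∀ j r, constantCoeff (φ j r) = r
  coeff_one_apply_self : ∀ j, coeff 1 (φ j (t j)) = 1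
  coeff_apply_of_ne : ∀ i j k, i ≠ j → 1 ≤ k → coeff k (φ j (t i)) = 0

namespace IsHasseDual

open Ideal

variable {m : ℕ}

theorem apply_eq_C {t : Fin m → R} {φ : Fin m → R →+* R⟦X⟧} (h : IsHasseDual t φ) {i j : Fin m}
    (hij : i ≠ j) : φ j (t i) = C (t i) := by
  ext k
  rcases Nat.eq_zero_or_pos k with rfl | hk
  · simp [h.constantCoeff_apply]
  · rw [h.coeff_apply_of_ne i j k hij hk, coeff_C, if_neg hk.ne']

section Succ

variable {t : Fin (m + 1) → R} {φ : Fin (m + 1) → R →+* R⟦X⟧}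

theorem isHasseStable_span_zero (h : IsHasseDual t φ) (j : Fin m) :
    (span {t 0}).IsHasseStable (φ j.succ) :=
  isHasseStable_span_singleton (h.apply_eq_C (Fin.succ_ne_zero j).symm)

theorem quotient (h : IsHasseDual t φ) :
    IsHasseDual (fun i => Ideal.Quotient.mk (span {t 0}) (t i.succ))
      (fun j => quotientHasse _ (φ j.succ) (h.isHasseStable_span_zero j)) where
  constantCoeff_apply j := Ideal.Quotient.mk_surjective.forall.mpr fun r => by
    rw [← coeff_zero_eq_constantCoeff_apply, coeff_quotientHasse_mk,
      coeff_zero_eq_constantCoeff_apply, h.constantCoeff_apply]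
  coeff_one_apply_self j := by simp [h.coeff_one_apply_self]
  coeff_apply_of_ne i j k hij hk := by
    simp [h.coeff_apply_of_ne _ _ k ((Fin.succ_injective _).ne hij) hk]

theorem colon_pow_le (h : IsHasseDual t φ) {I : Ideal R} (hIt : I ≤ span (Set.range t))
    (hI : I.IsHasseStable (φ 0)) (a : ℕ) : I.colon {t 0 ^ a} ≤ span (Set.range t) := by
  intro s hs
  rw [Submodule.mem_colon_singleton, smul_eq_mul, mul_comm] at hs
  have hcongr := coeff_apply_pow_mul_sub_mem (h.constantCoeff_apply 0) (h.coeff_one_apply_self 0)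
    (subset_span (Set.mem_range_self 0)) a s
  simpa using sub_mem (hIt (hI _ hs a)) hcongr

theorem isHasseStable_colon_pow (h : IsHasseDual t φ) {I : Ideal R}
    (hI : ∀ j, I.IsHasseStable (φ j)) (a : ℕ) (j : Fin m) :
    (I.colon {t 0 ^ a}).IsHasseStable (φ j.succ) :=
  (hI j.succ).colon_singleton (by rw [map_pow, h.apply_eq_C (Fin.succ_ne_zero j).symm, map_pow])

end Succ

theorem eq_bot [IsNoetherianRing R] {t : Fin m → R} {φ : Fin m → R →+* R⟦X⟧}
    (h : IsHasseDual t φ) (ht : span (Set.range t) ≤ jacobson ⊥) {I : Ideal R}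
    (hIt : I ≤ span (Set.range t)) (hI : ∀ j, I.IsHasseStable (φ j)) : I = ⊥ := by
  induction m generalizing R with
  | zero => simpa using hIt
  | succ m ih =>
    set J := span {t 0}
    have hJt : J ≤ span (Set.range t) :=
      span_le.mpr (Set.singleton_subset_iff.mpr (subset_span (Set.mem_range_self 0)))
    suffices ∀ a, I ≤ J ^ a by
      rw [eq_bot_iff, ← iInf_pow_eq_bot_of_le_jacobson (hJt.trans ht)]
      exact le_iInf this
    intro a
    induction a with
    | zero => simp
    | succ a iha =>
      intro r hr
      obtain ⟨s, rfl⟩ := mem_span_singleton'.mp (span_singleton_pow (t 0) a ▸ iha hr)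
      have hcolon : I.colon {t 0 ^ a} ≤ J := by
        rw [← mk_ker (I := J), ← map_eq_bot_iff_le_ker]
        refine ih h.quotient ?_ ?_ fun j => (h.isHasseStable_colon_pow hI a j).map_quotient _
        · rw [← map_mk_span_range_fin_succ]
          exact (map_mono ht).trans map_mk_jacobson_bot_le
        · rw [← map_mk_span_range_fin_succ]
          exact map_mono (h.colon_pow_le hIt (hI 0) a)
      rw [pow_succ, mul_comm s]
      exact mul_mem_mul (pow_mem_pow (mem_span_singleton_self _) a)
        (hcolon (Submodule.mem_colon_singleton.mpr hr))

end IsHasseDual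

section Module

open Submodule Finset.HasAntidiagonal

variable {M : Type*} [AddCommGroup M] [Module R M] {ι : Type*} [Fintype ι]

variable (R) in
def relationIdeal (x : ι → M) : Ideal R :=
  Ideal.span {r | ∃ d : ι → R, ∑ i, d i • x i = 0 ∧ r ∈ Set.range d}

variable {x : ι → M}

theorem mem_relationIdeal {d : ι → R} (hd : ∑ i, d i • x i = 0) (i : ι) :
    d i ∈ relationIdeal R x :=
  Ideal.subset_span ⟨d, hd, i, rfl⟩

theorem mem_relationIdeal_of_sum_smul_mem (hx : span R (Set.range x) = ⊤) {c : ι → R}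
    (hc : ∑ i, c i • x i ∈ relationIdeal R x • (⊤ : Submodule R M)) (i : ι) :
    c i ∈ relationIdeal R x := by
  rw [← hx, mem_ideal_smul_span_iff_exists_sum] at hc
  obtain ⟨a, ha, hca⟩ := hc
  rw [Finsupp.sum_fintype _ _ (by simp)] at hca
  have hrel : ∑ i, (c - a) i • x i = 0 := by simp [sub_smul, hca]
  simpa using add_mem (mem_relationIdeal hrel i) (ha i)

theorem mem_span_image_compl_of_isUnit {d : ι → R} (hd : ∑ i, d i • x i = 0) {i : ι}
    (hi : IsUnit (d i)) : x i ∈ span R (x '' {i}ᶜ) := by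
  classical
  rw [← smul_mem_iff_of_isUnit _ hi,
    eq_neg_of_add_eq_zero_left ((Finset.add_sum_erase _ _ (Finset.mem_univ i)).trans hd)]
  exact neg_mem (sum_mem fun l hl =>
    smul_mem _ _ (subset_span (Set.mem_image_of_mem _ (Finset.ne_of_mem_erase hl))))

theorem relationIdeal_le_maximalIdeal [IsLocalRing R] (hx : span R (Set.range x) = ⊤)
    (hmin : ∀ i, span R (x '' {i}ᶜ) ≠ ⊤) : relationIdeal R x ≤ IsLocalRing.maximalIdeal R := by
  rw [relationIdeal, Ideal.span_le]
  rintro _ ⟨d, hd, i, rfl⟩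
  refine (IsLocalRing.mem_maximalIdeal _).mpr fun hi => hmin i ?_
  rw [← hx, ← Set.insert_image_compl_eq_range _ i,
    span_insert_eq_span (mem_span_image_compl_of_isUnit hd hi)]

theorem isHasseStable_relationIdeal {φ : R →+* R⟦X⟧} (Φ : ℕ → M →+ M) (hΦ0 : ∀ y, Φ 0 y = y)
    (hΦsmul : ∀ k (r : R) y, Φ k (r • y) = ∑ p ∈ antidiagonal k, coeff p.1 (φ r) • Φ p.2 y)
    (hx : span R (Set.range x) = ⊤) : (relationIdeal R x).IsHasseStable φ := by
  refine Ideal.isHasseStable_span ?_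
  rintro _ ⟨d, hd, i, rfl⟩ k
  induction k using Nat.strong_induction_on generalizing i with
  | _ k ih =>
  refine mem_relationIdeal_of_sum_smul_mem (c := fun l => coeff k (φ (d l))) hx ?_ i
  have hΦd : ∑ l, ∑ p ∈ antidiagonal k, coeff p.1 (φ (d l)) • Φ p.2 (x l) = 0 := by
    simp [← hΦsmul, ← map_sum, hd]
  have hk0 : (k, 0) ∈ antidiagonal k := mem_antidiagonal.mpr (add_zero k)
  have hsplit : ∀ l, ∑ p ∈ antidiagonal k, coeff p.1 (φ (d l)) • Φ p.2 (x l) =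
      coeff k (φ (d l)) • x l +
        ∑ p ∈ (antidiagonal k).erase (k, 0), coeff p.1 (φ (d l)) • Φ p.2 (x l) := fun l => by
    rw [← Finset.add_sum_erase _ _ hk0, hΦ0]
  rw [Finset.sum_congr rfl fun l _ => hsplit l, Finset.sum_add_distrib,
    add_eq_zero_iff_eq_neg] at hΦd
  rw [hΦd]
  refine neg_mem (sum_mem fun l _ => sum_mem fun p hp => smul_mem_smul (ih p.1 ?_ l) mem_top)
  obtain ⟨hne, hp⟩ := Finset.mem_erase.mp hp
  rw [mem_antidiagonal] at hp
  rcases p with ⟨p₁, p₂⟩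
  simp only [ne_eq, Prod.mk.injEq] at hne hp ⊢
  omega

theorem IsHasseDual.linearIndependent [IsLocalRing R] [IsNoetherianRing R] {m : ℕ}
    {t : Fin m → R} {φ : Fin m → R →+* R⟦X⟧} (h : IsHasseDual t φ)
    (ht : Ideal.span (Set.range t) = IsLocalRing.maximalIdeal R) (Φ : Fin m → ℕ → M →+ M)
    (hΦ0 : ∀ j y, Φ j 0 y = y)
    (hΦsmul : ∀ j k (r : R) y, Φ j k (r • y) =
      ∑ p ∈ antidiagonal k, coeff p.1 (φ j r) • Φ j p.2 y)
    (hx : span R (Set.range x) = ⊤) (hmin : ∀ i, span R (x '' {i}ᶜ) ≠ ⊤) :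
    LinearIndependent R x := by
  have hrel : relationIdeal R x = ⊥ :=
    h.eq_bot (ht ▸ IsLocalRing.maximalIdeal_le_jacobson _)
      ((relationIdeal_le_maximalIdeal hx hmin).trans ht.ge)
      fun j => isHasseStable_relationIdeal (Φ j) (hΦ0 j) (hΦsmul j) hx
  rw [Fintype.linearIndependent_iff]
  intro c hc i
  simpa [hrel] using mem_relationIdeal hc i

end Module

theorem Module.Finite.exists_finset_minimal_span_eq_top (R M : Type*) [CommRing R]
    [AddCommGroup M] [Module R M] [Module.Finite R M] :
    ∃ s : Finset M, Submodule.span R (Set.range ((↑) : s → M)) = ⊤ ∧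
      ∀ i : s, Submodule.span R (((↑) : s → M) '' {i}ᶜ) ≠ ⊤ := by
  classical
  obtain ⟨s, hs⟩ := exists_minimal_of_wellFoundedLT
    (fun s : Finset M => Submodule.span R (s : Set M) = ⊤) (Module.Finite.fg_top (R := R))
  refine ⟨s, by simpa using hs.prop, fun i hi => hs.not_prop_of_lt (Finset.erase_ssubset i.2) ?_⟩
  convert hi using 2
  ext
  aesop

end

theorem module_with_higher_connection_free_general {K R : Type*} [Field K] [CommRing R]
    [IsLocalRing R] [IsNoetherianRing R] [Algebra K R]
    (m : ℕ) (t : Fin m → R)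
    (hspan : Ideal.span (Set.range t) = IsLocalRing.maximalIdeal R)
    (φ : Fin m → (R →ₐ[K] PowerSeries R))
    (h0 : ∀ j (r : R), PowerSeries.constantCoeff (R := R) (φ j r) = r)
    (hδ : ∀ i j : Fin m, PowerSeries.coeff (R := R) 1 ((φ j) (t i)) = if i = j then 1 else 0)
    (hoff : ∀ (i j : Fin m) (k : ℕ), i ≠ j → 1 ≤ k →
      PowerSeries.coeff (R := R) k ((φ j) (t i)) = 0)
    (M : Type*) [AddCommGroup M] [Module R M] [Module.Finite R M]
    (Φ : Fin m → ℕ → M → M)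
    (hΦadd : ∀ j k (x y : M), Φ j k (x + y) = Φ j k x + Φ j k y)
    (hΦ0 : ∀ j (x : M), Φ j 0 x = x)
    (hΦsmul : ∀ j k (r : R) (x : M),
      Φ j k (r • x) = ∑ p ∈ Finset.HasAntidiagonal.antidiagonal k,
        (PowerSeries.coeff (R := R) p.1 ((φ j) r)) • Φ j p.2 x) :
    Module.Free R M ∧
      ∀ (n : ℕ) (x : Fin n → M), Submodule.span R (Set.range x) = ⊤ →
        (∀ s : Finset (Fin n), Submodule.span R (x '' ↑s) = ⊤ → s = Finset.univ) →
        LinearIndependent R x := by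
  have hdual : IsHasseDual t fun j => (φ j : R →+* R⟦X⟧) :=
    ⟨h0, fun j => by simpa using hδ j j, hoff⟩
  let Ψ j k : M →+ M := AddMonoidHom.mk' (Φ j k) (hΦadd j k)
  refine ⟨?_, fun n x hx hmin => hdual.linearIndependent hspan Ψ hΦ0 hΦsmul hx fun i hi => ?_⟩
  · obtain ⟨s, hs, hsmin⟩ := Module.Finite.exists_finset_minimal_span_eq_top R M
    exact Module.Free.of_basis
      (Module.Basis.mk (hdual.linearIndependent hspan Ψ hΦ0 hΦsmul hs hsmin) hs.ge)
  · have := hmin (Finset.univ.erase i) (by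
      rwa [Finset.coe_erase, Finset.coe_univ, ← Set.compl_eq_univ_sdiff])
    simp at this

/-- Over a regular local ring `(R, 𝔪)` with commuting iterative
derivations `φ_{t_j}` as in the lemma on invertible derivatives, every finitely
generated `R`-module `M` equipped with compatible higher derivations `Φ_j` (additive,
`Φ_j^{(0)} = id`, and `Φ_j(rm) = φ_{t_j}(r)·Φ_j(m)` componentwise) is free; more
precisely, any minimal generating family of `M` is linearly independent (hence a
basis). -/
theorem module_with_higher_connection_free {K R : Type*} [Field K] [CommRing R]
    [IsDomain R] [IsLocalRing R] [IsNoetherianRing R] [Algebra K R]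
    (m : ℕ) (t : Fin m → R)
    (hspan : Ideal.span (Set.range t) = IsLocalRing.maximalIdeal R)
    (hdim : ringKrullDim R = m)
    (φ : Fin m → (R →ₐ[K] PowerSeries R))
    (h0 : ∀ j (r : R), PowerSeries.constantCoeff (R := R) (φ j r) = r)
    (hiter : ∀ j (i i' : ℕ) (r : R),
      PowerSeries.coeff (R := R) i ((φ j) (PowerSeries.coeff (R := R) i' ((φ j) r))) =
        (((i + i').choose i : K)) • PowerSeries.coeff (R := R) (i + i') ((φ j) r))
    (hcomm : ∀ (j j' : Fin m) (i i' : ℕ) (r : R),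
      PowerSeries.coeff (R := R) i ((φ j) (PowerSeries.coeff (R := R) i' ((φ j') r))) =
        PowerSeries.coeff (R := R) i' ((φ j') (PowerSeries.coeff (R := R) i ((φ j) r))))
    (hδ : ∀ i j : Fin m, PowerSeries.coeff (R := R) 1 ((φ j) (t i)) = if i = j then 1 else 0)
    (hoff : ∀ (i j : Fin m) (k : ℕ), i ≠ j → 1 ≤ k →
      PowerSeries.coeff (R := R) k ((φ j) (t i)) = 0)
    (M : Type*) [AddCommGroup M] [Module R M] [Module.Finite R M]
    (Φ : Fin m → ℕ → M → M)
    (hΦadd : ∀ j k (x y : M), Φ j k (x + y) = Φ j k x + Φ j k y)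
    (hΦ0 : ∀ j (x : M), Φ j 0 x = x)
    (hΦsmul : ∀ j k (r : R) (x : M),
      Φ j k (r • x) = ∑ p ∈ Finset.HasAntidiagonal.antidiagonal k,
        (PowerSeries.coeff (R := R) p.1 ((φ j) r)) • Φ j p.2 x) :
    Module.Free R M ∧
      ∀ (n : ℕ) (x : Fin n → M), Submodule.span R (Set.range x) = ⊤ →
        (∀ s : Finset (Fin n), Submodule.span R (x '' ↑s) = ⊤ → s = Finset.univ) →
        LinearIndependent R x :=
  module_with_higher_connection_free_general m t hspan φ h0 hδ hoff M Φ hΦadd hΦ0 hΦsmul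
end

section
/- For all i, j ∈ ℕ and every prime p, if C(i+j, i) ≢ 0 (mod p) then the identity Σ_{k₁+⋯+k_e = k} C(i+k₁,i)⋯C(i+k_e,i) gives the leading coefficient e·C(i+k,i) for the term with exactly one kₛ = k; in particular, in the polynomial ring F[d^(i)t : i ∈ ℕ] over a field F of characteristic p, the operator d^(k) defined on generators by d^(k)(d^(i)t) = C(i+k,i)·d^(i+k)t and extended by the Leibniz-type rule d^(k)(xy) = Σ_{a+b=k} d^(a)(x)d^(b)(y) satisfies: d^(k)((d^(i)t)^e) = 0 whenever p ∣ e and p ∤ k, and d^(k)((d^(i)t)^e) = (d^(k/p)((d^(i)t)^{e/p}))^p whenever p ∣ e and p ∣ k. -/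
open MvPolynomial

/-- The multinomial expansion `d^{(k)}((d^{(i)}t)^e) = Σ_{k₁+⋯+k_e=k} ∏ₛ C(i+kₛ,i) ·
∏ₛ d^{(i+kₛ)}t` of the universal iterative derivation applied to a power of a variable,
in the polynomial ring `F[d^{(i)}t : i ∈ ℕ]` (the variable `n` stands for `d^{(n)}t`). -/
noncomputable def dPow (F : Type*) [Field F] (i e k : ℕ) : MvPolynomial ℕ F :=
  ∑ κ ∈ Finset.univ.filter (fun κ : Fin e → Fin (k + 1) => (∑ s, ((κ s : ℕ))) = k),
    ∏ s, (MvPolynomial.C (((i + (κ s : ℕ)).choose i : F)) *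
      MvPolynomial.X (i + (κ s : ℕ)))

/-!
Write `a j = C(i+j,i) d^{(i+j)}t` for `d^{(j)}(d^{(i)}t)` and `G_N = ∑_{j ≤ N} a j T^j`.
Expanding `G_k^e` as a sum over `κ : Fin e → Fin (k+1)` shows that `dPow F i e k` is the
`T^k`-coefficient of `G_k^e`, hence of `G_N^e` for every `N ≥ k`. In characteristic `p`,
`G^{pm} = (G^m)^p` is `G^m` with `T` replaced by `T^p` and coefficients raised to the `p`-th
power, which gives the vanishing and the Frobenius statements. For the leading coefficient, kill
every variable except `d^{(i)}t` and `d^{(i+k)}t`: then `G_k` becomes `x + c y T^k` with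
`c = C(i+k,i)`, and the `T^k`-coefficient of its `e`-th power is `e c x^{e-1} y`.
-/

namespace Polynomial

section CommSemiring

variable {R : Type*} [CommSemiring R]

noncomputable def truncGen (a : ℕ → R) (N : ℕ) : R[X] :=
  ∑ j : Fin (N + 1), C (a j) * X ^ (j : ℕ)

theorem coeff_truncGen (a : ℕ → R) (N n : ℕ) :
    (truncGen a N).coeff n = if n ≤ N then a n else 0 := by
  simp only [truncGen, finsetSum_coeff, coeff_C_mul_X_pow]
  rw [Fin.sum_univ_eq_sum_range (fun j => if n = j then a j else 0), Finset.sum_ite_eq]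
  simp only [Finset.mem_range, Nat.lt_succ_iff]

theorem coeff_truncGen_pow_self (a : ℕ → R) (e k : ℕ) :
    ((truncGen a k) ^ e).coeff k =
      ∑ κ ∈ Finset.univ.filter (fun κ : Fin e → Fin (k + 1) => ∑ s, (κ s : ℕ) = k),
        ∏ s, a (κ s) := by
  simp only [truncGen, Fintype.sum_pow, Finset.prod_mul_distrib, ← map_prod,
    Finset.prod_pow_eq_pow_sum, finsetSum_coeff, coeff_C_mul_X_pow, Finset.sum_filter, eq_comm]

theorem coeff_pow_expChar (p : ℕ) [ExpChar R p] (f : R[X]) (n : ℕ) :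
    (f ^ p).coeff n = if p ∣ n then f.coeff (n / p) ^ p else 0 := by
  rw [← map_frobenius_expand p, coeff_map, coeff_expand (expChar_pos R p)]
  split_ifs
  · rfl
  · exact zero_pow (expChar_pos R p).ne'

theorem coeff_C_add_C_mul_X_pow_pow {k : ℕ} (hk : k ≠ 0) (A B : R) (e : ℕ) :
    ((C A + C B * X ^ k) ^ e).coeff k = e * A ^ (e - 1) * B := by
  have hterm : ∀ m, (C B * X ^ k) ^ m * C A ^ (e - m) * (e.choose m : R[X]) =
      C (B ^ m * A ^ (e - m) * e.choose m) * X ^ (k * m) := fun m => by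
    simp only [mul_pow, ← C_pow, pow_mul, map_mul, map_natCast]; ring
  rw [add_comm, add_pow, finsetSum_coeff, Finset.sum_eq_single 1]
  · rw [hterm, coeff_C_mul_X_pow, if_pos (mul_one k).symm, Nat.choose_one_right]; ring
  · intro m _ hm
    rw [hterm, coeff_C_mul_X_pow, if_neg]
    intro h
    exact hm (by simpa [hk] using h)
  · intro h
    simp_all

end CommSemiring

theorem coeff_truncGen_pow_of_le {R : Type*} [CommRing R] (a : ℕ → R) {j N : ℕ} (h : j ≤ N)
    (e : ℕ) : ((truncGen a N) ^ e).coeff j = ((truncGen a j) ^ e).coeff j := by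
  have hdvd : X ^ (j + 1) ∣ truncGen a N - truncGen a j :=
    X_pow_dvd_iff.2 fun d hd => by
      rw [coeff_sub, coeff_truncGen, coeff_truncGen, if_pos (by omega), if_pos (by omega), sub_self]
  rw [← sub_eq_zero, ← coeff_sub]
  exact X_pow_dvd_iff.1 (hdvd.trans (sub_dvd_pow_sub_pow _ _ e)) j j.lt_succ_self

end Polynomial

section dPow

open Polynomial (truncGen coeff_truncGen_pow_self coeff_truncGen_pow_of_le coeff_pow_expChar
  coeff_C_add_C_mul_X_pow_pow)

variable {F : Type*} [Field F]

noncomputable def dVar (F : Type*) [Field F] (i j : ℕ) : MvPolynomial ℕ F :=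
  C ((i + j).choose i : F) * X (i + j)

theorem dPow_eq_coeff_truncGen_pow (i e k : ℕ) :
    dPow F i e k = ((truncGen (dVar F i) k) ^ e).coeff k := by
  rw [coeff_truncGen_pow_self]; rfl

theorem dPow_eq_coeff_truncGen_pow_of_le (i e : ℕ) {k N : ℕ} (h : k ≤ N) :
    dPow F i e k = ((truncGen (dVar F i) N) ^ e).coeff k := by
  rw [dPow_eq_coeff_truncGen_pow, coeff_truncGen_pow_of_le _ h]

theorem dPow_char_mul {p : ℕ} [CharP F p] (hp : p.Prime) (i m k : ℕ) :
    dPow F i (p * m) k = if p ∣ k then dPow F i m (k / p) ^ p else 0 := by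
  have : ExpChar (MvPolynomial ℕ F) p := ExpChar.prime hp
  rw [dPow_eq_coeff_truncGen_pow, pow_mul', coeff_pow_expChar,
    dPow_eq_coeff_truncGen_pow_of_le i m (Nat.div_le_self k p)]

theorem map_killCompl_truncGen_dVar (i : ℕ) {k : ℕ} (hinj : Function.Injective ![i, i + k]) :
    (truncGen (dVar F i) k).map
        (killCompl (R := F) hinj : MvPolynomial ℕ F →+* MvPolynomial (Fin 2) F) =
      Polynomial.C (X 0) + Polynomial.C (C ((i + k).choose i : F) * X 1) * Polynomial.X ^ k := by
  set φ : MvPolynomial ℕ F →+* MvPolynomial (Fin 2) F := ↑(killCompl (R := F) hinj)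
  have hk : k ≠ 0 := by rintro rfl; simp at hinj
  have hvar (j : ℕ) : φ (dVar F i j) = C ((i + j).choose i : F) * φ (X (i + j)) := by
    simp [φ, dVar]
  have hX₀ : φ (X i) = X 0 := by simpa [φ] using killCompl_rename_app hinj (X (R := F) 0)
  have hX₁ : φ (X (i + k)) = X 1 := by simpa [φ] using killCompl_rename_app hinj (X (R := F) 1)
  have hX_zero {n : ℕ} (h₀ : n ≠ i) (h₁ : n ≠ i + k) : φ (X n) = 0 := by
    simp [φ, killCompl, h₀, h₁]
  rw [truncGen, Polynomial.map_sum, Fintype.sum_eq_add 0 (Fin.last k)]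
  · simp only [Polynomial.map_mul, Polynomial.map_C, Polynomial.map_pow, Polynomial.map_X, hvar,
      Fin.val_zero, Fin.val_last, add_zero, hX₀, hX₁, Nat.choose_self, Nat.cast_one, map_one,
      one_mul, pow_zero, mul_one]
  · rw [Ne, Fin.ext_iff, Fin.val_zero, Fin.val_last]; omega
  · rintro j ⟨hj₀, hjk⟩
    have hj₀' : (j : ℕ) ≠ 0 := Fin.val_ne_zero_iff.mpr hj₀
    have hjk' : (j : ℕ) ≠ k := fun h => hjk (Fin.ext h)
    rw [Polynomial.map_mul, Polynomial.map_C, hvar, hX_zero (by omega) (by omega), mul_zero,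
      map_zero, zero_mul]

theorem coeff_dPow_single_add_single (i e : ℕ) {k : ℕ} (hk : k ≠ 0) :
    coeff (Finsupp.single (i + k) 1 + Finsupp.single i (e - 1)) (dPow F i e k) =
      e * (i + k).choose i := by
  have hinj : Function.Injective ![i, i + k] := injective_pair_iff_ne.2 (by omega)
  have hdom : Finsupp.single (i + k) 1 + Finsupp.single i (e - 1) =
      (Finsupp.single (1 : Fin 2) 1 + Finsupp.single 0 (e - 1)).mapDomain ![i, i + k] := by
    rw [Finsupp.mapDomain_add, Finsupp.mapDomain_single, Finsupp.mapDomain_single]; rfl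
  have hmono : (e : MvPolynomial (Fin 2) F) * X 0 ^ (e - 1) * (C ((i + k).choose i : F) * X 1) =
      monomial (Finsupp.single 1 1 + Finsupp.single 0 (e - 1)) (e * (i + k).choose i : F) := by
    rw [X_pow_eq_monomial, X, ← map_natCast C, C_mul_monomial, C_mul_monomial, monomial_mul,
      add_comm, mul_one, mul_one]
  rw [hdom, ← coeff_killCompl hinj, dPow_eq_coeff_truncGen_pow, ← RingHom.coe_coe,
    ← Polynomial.coeff_map, Polynomial.map_pow, map_killCompl_truncGen_dVar i hinj,
    coeff_C_add_C_mul_X_pow_pow hk, hmono, coeff_monomial, if_pos rfl]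

end dPow

/-- In characteristic `p`: the term of `d^{(k)}((d^{(i)}t)^e)` with
exactly one `kₛ = k` has coefficient `e·C(i+k,i)`; moreover
`d^{(k)}((d^{(i)}t)^e) = 0` whenever `p ∣ e` and `p ∤ k`, and
`d^{(k)}((d^{(i)}t)^e) = (d^{(k/p)}((d^{(i)}t)^{e/p}))^p` whenever `p ∣ e` and
`p ∣ k`. -/
theorem dPow_properties (F : Type*) [Field F] (p : ℕ) [CharP F p] (hp : p.Prime) :
    (∀ i e k : ℕ, 1 ≤ e → 1 ≤ k →
      MvPolynomial.coeff (Finsupp.single (i + k) 1 + Finsupp.single i (e - 1))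
          (dPow F i e k) = (e : F) * (((i + k).choose i : F))) ∧
    (∀ i e k : ℕ, p ∣ e → ¬ p ∣ k → dPow F i e k = 0) ∧
    (∀ i e k : ℕ, p ∣ e → p ∣ k → dPow F i e k = (dPow F i (e / p) (k / p)) ^ p) := by
  refine ⟨fun i e k _ hk => coeff_dPow_single_add_single i e (by omega), ?_, ?_⟩
  · rintro i _ k ⟨m, rfl⟩ hk
    rw [dPow_char_mul hp, if_neg hk]
  · rintro i _ k ⟨m, rfl⟩ hk
    rw [dPow_char_mul hp, if_pos hk, Nat.mul_div_cancel_left m hp.pos]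
end

section
/- Let F be a field of characteristic p > 0 and D : F → F an additive map satisfying D(xy) = xD(y) + D(x)y and ker(D) = F^p. If E/F is a field extension and D extends to a derivation D_E : E → E, then E/F is separable (every element of E algebraic over F is separable over F). -/
/-!
If `e` were inseparable, its minimal polynomial would be `expand p g` with `g` the minimal
polynomial of `e ^ p`. Since `(e ^ p)′ = 0`, differentiating `g(e ^ p) = 0` coefficientwise
gives a polynomial of smaller degree vanishing at `e ^ p`, so every coefficient of `g` is a
constant, i.e. a `p`-th power. Then `expand p g` is a `p`-th power, contradicting irreducibility.
-/

open Polynomial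
open scoped Differential

def Derivation.ofAddLeibniz {A : Type*} [CommRing A] (D : A → A)
    (hadd : ∀ x y, D (x + y) = D x + D y) (hleib : ∀ x y, D (x * y) = x * D y + D x * y) :
    Derivation ℤ A A :=
  Derivation.mk' (AddMonoidHom.mk' D hadd).toIntLinearMap fun x y => by
    simp [hleib, mul_comm]

theorem Derivation.map_pow_char {R A M : Type*} [CommSemiring R] [CommSemiring A]
    [AddCommMonoid M] [Algebra R A] [Module A M] [Module R M] (d : Derivation R A M)
    (p : ℕ) [CharP A p] (a : A) : d (a ^ p) = 0 := by
  rw [Derivation.leibniz_pow, ← Nat.cast_smul_eq_nsmul A, CharP.cast_eq_zero, zero_smul]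

theorem Polynomial.exists_expand_eq_pow {R : Type*} [CommSemiring R] (p : ℕ) [ExpChar R p]
    {g : R[X]} (hg : ∀ i, ∃ y, y ^ p = g.coeff i) : ∃ r : R[X], expand R p g = r ^ p := by
  obtain ⟨r, rfl⟩ : g ∈ lifts (frobenius R p) := (lifts_iff_coeff_lifts g).2 hg
  exact ⟨r, by rw [coe_mapRingHom, ← map_expand, map_frobenius_expand]⟩

theorem minpoly_eq_expand_minpoly_pow {F E : Type*} [Field F] [Field E] [Algebra F E]
    (p : ℕ) [CharP F p] [Fact p.Prime] {e : E} (he : IsIntegral F e)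
    (hsep : ¬IsSeparable F e) : minpoly F e = expand F p (minpoly F (e ^ p)) := by
  obtain ⟨g, hirr, hg⟩ := ((separable_or p (minpoly.irreducible he)).resolve_left hsep).2
  have hmonic : g.Monic := (monic_expand_iff (Fact.out : p.Prime).pos).1 (hg ▸ minpoly.monic he)
  have hroot : aeval (e ^ p) g = 0 := by rw [← expand_aeval, hg, minpoly.aeval]
  rw [← hg, ← minpoly.eq_of_irreducible_of_monic hirr hroot hmonic]

namespace Differential

theorem degree_mapCoeffs_lt {A : Type*} [CommRing A] [Nontrivial A] [Differential A]
    {q : A[X]} (hq : q.Monic) : degree (mapCoeffs q) < degree q := by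
  rw [degree_eq_natDegree hq.ne_zero, degree_lt_iff_coeff_zero]
  intro m hm
  rw [coeff_mapCoeffs]
  rcases hm.eq_or_lt with rfl | hlt
  · rw [hq.coeff_natDegree, Derivation.map_one_eq_zero]
  · rw [coeff_eq_zero_of_natDegree_lt hlt, map_zero]

theorem mapCoeffs_minpoly_eq_zero {F E : Type*} [Field F] [CommRing E]
    [Differential F] [Differential E] [Algebra F E] [DifferentialAlgebra F E]
    {x : E} (hx : x′ = 0) : mapCoeffs (minpoly F x) = 0 := by
  by_cases hint : IsIntegral F x
  swap
  · rw [minpoly.eq_zero hint, map_zero]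
  by_contra hne
  have hroot : aeval x (mapCoeffs (minpoly F x)) = 0 := by
    have := deriv_aeval_eq (A := F) x (minpoly F x)
    rwa [minpoly.aeval, hx, mul_zero, add_zero, map_zero, eq_comm] at this
  exact (minpoly.degree_le_of_ne_zero F x hne hroot).not_gt
    (degree_mapCoeffs_lt (minpoly.monic hint))

end Differential

/-- Let `F` be a field of characteristic `p > 0` and `D : F → F` an
additive map with `D(xy) = xD(y) + D(x)y` and `ker D = F^p`. If `E/F` is a field
extension and `D` extends to a derivation `D_E : E → E`, then `E/F` is separable: every
element of `E` algebraic over `F` is separable over `F`. -/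
theorem separable_of_derivation_with_kernel_Fp {F E : Type*} [Field F] [Field E]
    [Algebra F E] (p : ℕ) [CharP F p] (hp : p.Prime)
    (D : F → F)
    (hDadd : ∀ x y : F, D (x + y) = D x + D y)
    (hDleib : ∀ x y : F, D (x * y) = x * D y + D x * y)
    (hker : ∀ x : F, D x = 0 ↔ ∃ y : F, y ^ p = x)
    (DE : E → E)
    (hEadd : ∀ x y : E, DE (x + y) = DE x + DE y)
    (hEleib : ∀ x y : E, DE (x * y) = x * DE y + DE x * y)
    (hext : ∀ x : F, DE (algebraMap F E x) = algebraMap F E (D x)) :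
    ∀ e : E, IsIntegral F e → IsSeparable F e := by
  have : Fact p.Prime := ⟨hp⟩
  have : CharP E p := charP_of_injective_algebraMap (algebraMap F E).injective p
  let : Differential F := ⟨.ofAddLeibniz D hDadd hDleib⟩
  let : Differential E := ⟨.ofAddLeibniz DE hEadd hEleib⟩
  have : DifferentialAlgebra F E := ⟨hext⟩
  intro e he
  by_contra hsep
  have hconst : Differential.mapCoeffs (minpoly F (e ^ p)) = 0 :=
    Differential.mapCoeffs_minpoly_eq_zero (Derivation.map_pow_char _ p e)
  -- `coeff (mapCoeffs q) i` unfolds to `D (coeff q i)`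
  obtain ⟨r, hr⟩ := exists_expand_eq_pow p fun i =>
    (hker _).1 (congrArg (coeff · i) hconst)
  exact not_irreducible_pow hp.ne_one
    (hr ▸ minpoly_eq_expand_minpoly_pow p he hsep ▸ minpoly.irreducible he)
end
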